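/- arXiv:2212.14738 — 10 statements merged into one kernel-verified Lean document; each statement's English description precedes it below -/
import Mathlib

section
/- Let m ≥ 3 be an integer and let α₁, …, α_m ∈ (0, π) be real numbers with α₁ + ⋯ + α_m < (m − 2)π. Then there exists a unique real number x > 0 such that ∑_{i=1}^{m} 2·arcsin( cos(α_i/2) / cosh x ) = 2π. -/
/-!
The central-angle sum `x ↦ ∑ i, 2 arcsin (cos (αᵢ/2) / cosh x)` is continuous and strictly
decreasing on `[0, ∞)`, since `cosh` is strictly increasing there and `arcsin` is strictly
increasing on `[-1, 1]`. At `x = 0` each term is `π - αᵢ`, so the sum is `mπ - ∑ αᵢ > 2π`;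
as `x → ∞` every term tends to `arcsin 0 = 0`. The intermediate value theorem gives a solution
of `sum = 2π` in `(0, ∞)`, and strict monotonicity makes it unique.
-/

open Real Filter Set Topology

namespace Real

lemma tendsto_cosh_atTop : Tendsto cosh atTop atTop := by
  refine tendsto_atTop_mono (fun x => ?_) (tendsto_exp_atTop.atTop_div_const two_pos)
  rw [cosh_eq]
  linarith [exp_pos (-x)]

lemma arcsin_cos {x : ℝ} (h₀ : 0 ≤ x) (h₁ : x ≤ π) : arcsin (cos x) = π / 2 - x := by
  linarith [arccos_eq_pi_div_two_sub_arcsin (cos x), arccos_cos h₀ h₁]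

lemma continuous_arcsin_div_cosh (c : ℝ) : Continuous fun x => arcsin (c / cosh x) :=
  continuous_arcsin.comp (continuous_const.div continuous_cosh fun x => (cosh_pos x).ne')

lemma strictAntiOn_arcsin_div_cosh {c : ℝ} (hc₀ : 0 < c) (hc₁ : c ≤ 1) :
    StrictAntiOn (fun x => arcsin (c / cosh x)) (Ici 0) := by
  intro x hx y hy hxy
  have hmem : ∀ z, c / cosh z ∈ Icc (-1) 1 := fun z =>
    ⟨by linarith [div_nonneg hc₀.le (cosh_pos z).le],
      div_le_one_of_le₀ (hc₁.trans (one_le_cosh z)) (cosh_pos z).le⟩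
  exact strictMonoOn_arcsin (hmem y) (hmem x)
    (div_lt_div_of_pos_left hc₀ (cosh_pos x) (cosh_strictMonoOn hx hy hxy))

lemma tendsto_arcsin_div_cosh_atTop (c : ℝ) :
    Tendsto (fun x => arcsin (c / cosh x)) atTop (𝓝 0) := by
  have h := (continuous_arcsin.tendsto 0).comp
    ((tendsto_const_nhds (x := c)).div_atTop tendsto_cosh_atTop)
  rwa [arcsin_zero] at h

end Real

lemma StrictAntiOn.existsUnique_pos_eq {f : ℝ → ℝ} {y : ℝ} (hf : StrictAntiOn f (Ici 0))
    (hcont : ContinuousOn f (Ici 0)) (h₀ : y < f 0) (hlim : ∀ᶠ x in atTop, f x < y) :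
    ∃! x, 0 < x ∧ f x = y := by
  obtain ⟨X, hX, hX₀⟩ := (hlim.and (eventually_ge_atTop 0)).exists
  obtain ⟨x, hx, hfx⟩ :=
    intermediate_value_Icc' hX₀ (hcont.mono Icc_subset_Ici_self) ⟨hX.le, h₀.le⟩
  have hx₀ : 0 < x := hx.1.lt_of_ne <| by rintro rfl; exact h₀.ne' hfx
  exact ⟨x, ⟨hx₀, hfx⟩, fun z ⟨hz, hfz⟩ =>
    hf.injOn hz.le hx₀.le (hfz.trans hfx.symm)⟩

noncomputable def centralAngleSum {ι : Type*} [Fintype ι] (α : ι → ℝ) (x : ℝ) : ℝ :=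
  ∑ i, 2 * arcsin (cos (α i / 2) / cosh x)

section CentralAngleSum

variable {ι : Type*} [Fintype ι] {α : ι → ℝ}

lemma continuous_centralAngleSum (α : ι → ℝ) : Continuous (centralAngleSum α) :=
  continuous_finsetSum _ fun _ _ => continuous_const.mul (continuous_arcsin_div_cosh _)

lemma strictAntiOn_centralAngleSum [Nonempty ι] (hα : ∀ i, α i ∈ Ioo 0 π) :
    StrictAntiOn (centralAngleSum α) (Ici 0) := by
  intro x hx y hy hxy
  refine Finset.sum_lt_sum_of_nonempty Finset.univ_nonempty fun i _ => ?_
  have hcos : 0 < cos (α i / 2) :=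
    cos_pos_of_mem_Ioo ⟨by linarith [(hα i).1, pi_pos], by linarith [(hα i).2]⟩
  linarith [strictAntiOn_arcsin_div_cosh hcos (cos_le_one _) hx hy hxy]

lemma centralAngleSum_zero (hα : ∀ i, α i ∈ Ioo 0 π) :
    centralAngleSum α 0 = Fintype.card ι * π - ∑ i, α i := by
  have hterm : ∀ i, 2 * arcsin (cos (α i / 2) / cosh 0) = π - α i := fun i => by
    rw [cosh_zero, div_one, arcsin_cos (by linarith [(hα i).1]) (by linarith [(hα i).2, pi_pos])]
    ring
  simp only [centralAngleSum, hterm, Finset.sum_sub_distrib, Finset.sum_const,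
    Finset.card_univ, nsmul_eq_mul]

lemma tendsto_centralAngleSum_atTop (α : ι → ℝ) :
    Tendsto (centralAngleSum α) atTop (𝓝 0) := by
  have h := tendsto_finsetSum Finset.univ fun i _ =>
    (tendsto_arcsin_div_cosh_atTop (cos (α i / 2))).const_mul 2
  simp only [mul_zero, Finset.sum_const_zero] at h
  exact h

end CentralAngleSum

theorem stmt_0 (m : ℕ) (hm : 3 ≤ m) (α : Fin m → ℝ)
    (hα : ∀ i, α i ∈ Set.Ioo 0 π)
    (hsum : ∑ i, α i < ((m : ℝ) - 2) * π) :
    ∃! x : ℝ, 0 < x ∧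
      ∑ i, 2 * Real.arcsin (Real.cos (α i / 2) / Real.cosh x) = 2 * π := by
  have : Nonempty (Fin m) := ⟨⟨0, by omega⟩⟩
  refine (strictAntiOn_centralAngleSum hα).existsUnique_pos_eq
    (continuous_centralAngleSum α).continuousOn ?_
    ((tendsto_centralAngleSum_atTop α).eventually (gt_mem_nhds two_pi_pos))
  rw [centralAngleSum_zero hα, Fintype.card_fin]
  linarith
end

section
/- Fix a real number x > 0. The function β : (0, π/2) → ℝ defined by β(α) = arcsin( cos α / cosh x ) is strictly concave on the open interval (0, π/2). -/
/-!
With `k = cosh x > 1`, the chain rule gives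
`β'(α) = -sin α / √(k² - cos² α) = -(sin α / √(k² - 1 + sin² α))`.
Since `t ↦ t / √(c + t²)` is strictly increasing on `t ≥ 0` for `c > 0`, and `sin` is strictly
increasing and nonnegative on `(0, π/2)`, the derivative `β'` is strictly decreasing there,
which is strict concavity.
-/

open Real Set

theorem strictMonoOn_div_sqrt_add_sq {c : ℝ} (hc : 0 < c) :
    StrictMonoOn (fun t : ℝ => t / √(c + t ^ 2)) (Ici 0) := by
  intro s hs t ht hst
  have hs' : 0 < c + s ^ 2 := by positivity
  have ht' : 0 < c + t ^ 2 := by positivity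
  dsimp only
  rw [div_lt_div_iff₀ (sqrt_pos.2 hs') (sqrt_pos.2 ht')]
  refine lt_of_pow_lt_pow_left₀ 2 (mul_nonneg (mem_Ici.1 ht) (sqrt_nonneg _)) ?_
  rw [mul_pow, mul_pow, sq_sqrt ht'.le, sq_sqrt hs'.le]
  have : s ^ 2 < t ^ 2 := pow_lt_pow_left₀ hst (mem_Ici.1 hs) two_ne_zero
  nlinarith

theorem hasDerivAt_arcsin_cos_div {k : ℝ} (hk : 1 < k) (α : ℝ) :
    HasDerivAt (fun α => arcsin (cos α / k)) (-(sin α / √(k ^ 2 - 1 + sin α ^ 2))) α := by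
  have hk0 : 0 < k := one_pos.trans hk
  have hlt : |cos α / k| < 1 := by
    rw [abs_div, abs_of_pos hk0, div_lt_one hk0]
    exact (abs_cos_le_one α).trans_lt hk
  have h := (hasDerivAt_arcsin (neg_lt_of_abs_lt hlt).ne' (lt_of_abs_lt hlt).ne).comp α
    ((hasDerivAt_cos α).div_const k)
  refine h.congr_deriv ?_
  have hrad : 1 - (cos α / k) ^ 2 = (k ^ 2 - 1 + sin α ^ 2) / k ^ 2 := by
    rw [eq_div_iff (by positivity), sub_mul, div_pow, div_mul_cancel₀ _ (by positivity)]
    linear_combination -sin_sq_add_cos_sq α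
  have hpos : 0 < k ^ 2 - 1 + sin α ^ 2 := by nlinarith [sq_nonneg (sin α)]
  rw [hrad, sqrt_div' _ (sq_nonneg k), sqrt_sq hk0.le]
  field_simp [(sqrt_pos.2 hpos).ne']

theorem strictConcaveOn_arcsin_cos_div {k : ℝ} (hk : 1 < k) :
    StrictConcaveOn ℝ (Ioo 0 (π / 2)) fun α => arcsin (cos α / k) := by
  have hderiv : deriv (fun α => arcsin (cos α / k)) =
      fun α => -(sin α / √(k ^ 2 - 1 + sin α ^ 2)) :=
    funext fun α => (hasDerivAt_arcsin_cos_div hk α).deriv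
  refine StrictAntiOn.strictConcaveOn_of_deriv (convex_Ioo _ _)
    (continuous_arcsin.comp (continuous_cos.div_const k)).continuousOn ?_
  rw [interior_Ioo, hderiv]
  have hsin : StrictMonoOn sin (Ioo 0 (π / 2)) :=
    strictMonoOn_sin.mono fun α hα => ⟨by linarith [pi_pos, hα.1], hα.2.le⟩
  have hc : 0 < k ^ 2 - 1 := by nlinarith
  exact ((strictMonoOn_div_sqrt_add_sq hc).comp hsin
    fun α hα => (sin_pos_of_pos_of_lt_pi hα.1 (by linarith [pi_pos, hα.2])).le).neg

theorem stmt_3 (x : ℝ) (hx : 0 < x) :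
    StrictConcaveOn ℝ (Set.Ioo 0 (π / 2))
      (fun α : ℝ => Real.arcsin (Real.cos α / Real.cosh x)) :=
  strictConcaveOn_arcsin_cos_div (one_lt_cosh.2 hx.ne')
end

section
/- Let x > 0 and θ₁, θ₂ ∈ (0, π) be real numbers satisfying cos(π/3) = cosh x · sin(θ₁/2), cos(π/6) = cosh x · sin(θ₂/2), and 2θ₁ + 4θ₂ = 2π. Then cosh x = 3/2, i.e. the inscribed circle radius is x = arccosh(3/2). -/
/-!
Since `θ₁ + 2θ₂ = π`, the first equation reads `1/2 = cosh x · cos θ₂ = c (1 - 2s²)` with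
`c = cosh x`, `s = sin (θ₂/2)`, while the second gives `(cs)² = 3/4`. Multiplying the first by `c`
eliminates `s`: `2c² - c - 3 = 0`, whose only positive root is `c = 3/2`.
-/

open Real

lemma sin_half_eq_one_sub_two_mul_sin_half_sq {α β : ℝ} (h : α + 2 * β = π) :
    sin (α / 2) = 1 - 2 * sin (β / 2) ^ 2 := by
  rw [show α / 2 = π / 2 - 2 * (β / 2) by linarith, sin_pi_div_two_sub, cos_two_mul_eq_one_sub]

lemma eq_three_halves_of_mul_one_sub_two_sq {c s : ℝ} (hc : 0 < c)
    (h₁ : c * (1 - 2 * s ^ 2) = 1 / 2) (h₂ : (c * s) ^ 2 = 3 / 4) : c = 3 / 2 := by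
  have hquad : (2 * c - 3) * (c + 1) = 0 := by linear_combination 2 * c * h₁ + 4 * h₂
  rcases mul_eq_zero.mp hquad with h | h <;> linarith

theorem stmt_5_general (x θ₁ θ₂ : ℝ) (hx : 0 < x)
    (e₁ : Real.cos (π / 3) = Real.cosh x * Real.sin (θ₁ / 2))
    (e₂ : Real.cos (π / 6) = Real.cosh x * Real.sin (θ₂ / 2))
    (e₃ : 2 * θ₁ + 4 * θ₂ = 2 * π) :
    Real.cosh x = 3 / 2 ∧
      x = Real.log (3 / 2 + Real.sqrt ((3 / 2) ^ 2 - 1)) := by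
  have hcosh : cosh x = 3 / 2 := by
    rw [cos_pi_div_three, sin_half_eq_one_sub_two_mul_sin_half_sq (β := θ₂) (by linarith)] at e₁
    rw [cos_pi_div_six] at e₂
    refine eq_three_halves_of_mul_one_sub_two_sq (cosh_pos x) e₁.symm ?_
    rw [← e₂, div_pow, sq_sqrt (by norm_num)]
    norm_num
  refine ⟨hcosh, ?_⟩
  -- `arcosh y` is by definition `log (y + √(y ^ 2 - 1))`.
  rw [← hcosh]
  exact (arcosh_cosh hx.le).symm

/-- Since Mathlib has no `Real.arcosh`, the conclusion `x = arccosh (3/2)` is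
expressed via the explicit formula `arccosh y = log (y + √(y² - 1))`. -/
theorem stmt_5 (x θ₁ θ₂ : ℝ) (hx : 0 < x)
    (hθ₁ : θ₁ ∈ Set.Ioo 0 π) (hθ₂ : θ₂ ∈ Set.Ioo 0 π)
    (e₁ : Real.cos (π / 3) = Real.cosh x * Real.sin (θ₁ / 2))
    (e₂ : Real.cos (π / 6) = Real.cosh x * Real.sin (θ₂ / 2))
    (e₃ : 2 * θ₁ + 4 * θ₂ = 2 * π) :
    Real.cosh x = 3 / 2 ∧
      x = Real.log (3 / 2 + Real.sqrt ((3 / 2) ^ 2 - 1)) :=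
  stmt_5_general x θ₁ θ₂ hx e₁ e₂ e₃
end

section
/- The exact identity 2·arcsin(1/3) + 4·arcsin(1/√3) = π holds, where arcsin is the real inverse sine function. -/
open Real

/-- The double-angle formula `cos 2a = 1 - 2 sin² a` at `a = arcsin x`; for `1 < x` both sides are
`-(π / 2)` by the junk values of `arcsin`. -/
theorem Real.arcsin_one_sub_two_mul_sq {x : ℝ} (hx : 0 ≤ x) :
    arcsin (1 - 2 * x ^ 2) = π / 2 - 2 * arcsin x := by
  rcases le_or_gt x 1 with hx₁ | hx₁
  · apply arcsin_eq_of_sin_eq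
    · rw [sin_pi_div_two_sub, cos_two_mul', ← cos_sq_add_sin_sq (arcsin x),
        sin_arcsin (by linarith) hx₁]
      ring
    · have := arcsin_nonneg.2 hx
      have := arcsin_le_pi_div_two x
      constructor <;> linarith
  · rw [arcsin_of_one_le hx₁.le, arcsin_of_le_neg_one (by nlinarith)]
    ring

theorem one_sub_two_mul_sq_one_div_sqrt_three : 1 - 2 * (1 / √3) ^ 2 = (1 / 3 : ℝ) := by
  rw [div_pow, sq_sqrt (by norm_num : (0 : ℝ) ≤ 3)]
  norm_num

theorem stmt_6 :
    2 * Real.arcsin (1 / 3) + 4 * Real.arcsin (1 / Real.sqrt 3) = π := by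
  rw [← one_sub_two_mul_sq_one_div_sqrt_three, arcsin_one_sub_two_mul_sq (by positivity)]
  ring
end

section
/- Fix an integer l ≥ 4 and a nonnegative integer w. The Diophantine system in nonnegative integers A₁, …, A_{l−1}, B₃, …, B_l given by ∑_{i=1}^{l−1} A_i = l, ∑_{j=3}^{l} B_j = w, and ∑_{i=1}^{l−1} i·A_i + ∑_{j=3}^{l} j·B_j = 2(l + w − 1) has a solution if and only if 0 ≤ w ≤ l − 2. Consequently, for any solution, the number n = 2(l + w − 1) satisfies 2l − 2 ≤ n ≤ 4l − 6. -/
/-!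
Every rotational center has degree at least 1 and every additional point degree at least 3, so
the side count `2(l + w - 1)` is at least `l + 3w`, which forces `w ≤ l - 2`. Conversely,
`w + 2` centers of degree 1, `l - w - 2` of degree 2 and `w` additional points of degree 3
realise the side count exactly.
-/

open Finset

lemma Finset.mul_sum_le_sum_mul_of_le {s : Finset ℕ} {c : ℕ} (f : ℕ → ℕ)
    (h : ∀ i ∈ s, c ≤ i) : c * ∑ i ∈ s, f i ≤ ∑ i ∈ s, i * f i := by
  rw [mul_sum]
  exact sum_le_sum fun i hi => Nat.mul_le_mul_right _ (h i hi)

lemma Finset.sum_mul_single_of_mem {s : Finset ℕ} {k : ℕ} (hk : k ∈ s) (a : ℕ) :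
    ∑ i ∈ s, i * (Pi.single k a : ℕ → ℕ) i = k * a := by
  rw [sum_eq_single_of_mem k hk fun i _ hik => by simp [hik]]
  simp

lemma le_sub_two_of_sum_eq {l w : ℕ} {A B : ℕ → ℕ}
    (hA : ∑ i ∈ Icc 1 (l - 1), A i = l) (hB : ∑ j ∈ Icc 3 l, B j = w)
    (hS : ∑ i ∈ Icc 1 (l - 1), i * A i + ∑ j ∈ Icc 3 l, j * B j = 2 * (l + w - 1)) :
    w ≤ l - 2 := by
  have hA' := mul_sum_le_sum_mul_of_le (s := Icc 1 (l - 1)) A fun i hi => (mem_Icc.mp hi).1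
  have hB' := mul_sum_le_sum_mul_of_le (s := Icc 3 l) B fun j hj => (mem_Icc.mp hj).1
  omega

lemma exists_sum_eq_of_le_sub_two {l w : ℕ} (hl : 3 ≤ l) (hw : w ≤ l - 2) :
    ∃ A B : ℕ → ℕ,
      (∑ i ∈ Icc 1 (l - 1), A i = l) ∧
      (∑ j ∈ Icc 3 l, B j = w) ∧
      (∑ i ∈ Icc 1 (l - 1), i * A i + ∑ j ∈ Icc 3 l, j * B j = 2 * (l + w - 1)) := by
  have h1 : 1 ∈ Icc 1 (l - 1) := mem_Icc.mpr ⟨le_rfl, by omega⟩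
  have h2 : 2 ∈ Icc 1 (l - 1) := mem_Icc.mpr ⟨by omega, by omega⟩
  have h3 : 3 ∈ Icc 3 l := mem_Icc.mpr ⟨le_rfl, hl⟩
  refine ⟨Pi.single 1 (w + 2) + Pi.single 2 (l - w - 2), Pi.single 3 w, ?_, ?_, ?_⟩
  · simp only [Pi.add_apply, sum_add_distrib, sum_pi_single', h1, h2, if_true]
    omega
  · simp only [sum_pi_single', h3, if_true]
  · simp only [Pi.add_apply, mul_add, sum_add_distrib, sum_mul_single_of_mem h1,
      sum_mul_single_of_mem h2, sum_mul_single_of_mem h3]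
    omega

theorem stmt_7 (l : ℕ) (hl : 4 ≤ l) (w : ℕ) :
    ((∃ A B : ℕ → ℕ,
        (∑ i ∈ Finset.Icc 1 (l - 1), A i = l) ∧
        (∑ j ∈ Finset.Icc 3 l, B j = w) ∧
        (∑ i ∈ Finset.Icc 1 (l - 1), i * A i + ∑ j ∈ Finset.Icc 3 l, j * B j
          = 2 * (l + w - 1))) ↔ w ≤ l - 2) ∧
    (w ≤ l - 2 →
      2 * l - 2 ≤ 2 * (l + w - 1) ∧ 2 * (l + w - 1) ≤ 4 * l - 6) := by
  refine ⟨⟨fun ⟨_, _, hA, hB, hS⟩ => le_sub_two_of_sum_eq hA hB hS,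
    exists_sum_eq_of_le_sub_two (by omega)⟩, fun _ => by omega⟩
end

section
/- Fix an integer l ≥ 4 and nonnegative integers A₁, …, A_{l−1}, B₃, …, B_l with w := ∑_{j=3}^{l} B_j satisfying ∑_{i=1}^{l−1} A_i = l and ∑_{i=1}^{l−1} i·A_i + ∑_{j=3}^{l} j·B_j = 2(l + w − 1). Define h(β) = ∑_{i=1}^{l−1} i·A_i·2·arcsin( 2·cos(π/(3i))·sin(β/2) ) + ∑_{j=3}^{l} j·B_j·2·arcsin( 2·cos(π/j)·sin(β/2) ) − 2π and K_l = 2·arcsin( 1 / (2·cos(π/(3(l−1)))) ). Then h(0) = −2π < 0 and h(K_l) ≥ 0. -/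
/-!
Since `sin (K_l / 2) = 1 / (2 cos (π / (3 (l - 1)))) ≥ 1 / 2`, each arcsine in `h (K_l)` is at least
`arcsin (cos θ) = π / 2 - θ` for its angle `θ ∈ {π / (3i), π / j}`. The resulting lower bound for
`h (K_l)` is linear in the `A_i, B_j`, and the two Diophantine equations evaluate it to
`2π (2l / 3 - 2) ≥ 0`.
-/

open Real Finset

lemma arcsin_cos_of_mem_Icc {θ : ℝ} (hθ0 : 0 ≤ θ) (hθ : θ ≤ π) : arcsin (cos θ) = π / 2 - θ := by
  rw [arcsin_eq_pi_div_two_sub_arccos, arccos_cos hθ0 hθ]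

lemma pi_div_two_sub_le_arcsin_two_mul_cos_mul {θ s : ℝ} (hθ0 : 0 ≤ θ) (hθ : θ ≤ π / 2)
    (hs : 1 / 2 ≤ s) : π / 2 - θ ≤ arcsin (2 * cos θ * s) := by
  have hcos : 0 ≤ cos θ := cos_nonneg_of_mem_Icc ⟨by linarith [pi_pos], hθ⟩
  rw [← arcsin_cos_of_mem_Icc hθ0 (by linarith [pi_pos])]
  exact monotone_arcsin (by nlinarith)

lemma one_half_le_sin_arcsin_inv_two_mul_cos {t : ℝ} (ht0 : 0 ≤ t) (ht : t ≤ π / 3) :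
    1 / 2 ≤ sin (2 * arcsin (1 / (2 * cos t)) / 2) := by
  have hcos : 1 / 2 ≤ cos t := by
    rw [← cos_pi_div_three]
    exact cos_le_cos_of_nonneg_of_le_pi ht0 (by linarith [pi_pos]) ht
  have hx0 : 0 ≤ 1 / (2 * cos t) := div_nonneg zero_le_one (by linarith)
  have hx1 : 1 / (2 * cos t) ≤ 1 := by rw [div_le_one (by linarith)]; linarith
  rw [mul_div_cancel_left₀ _ two_ne_zero, sin_arcsin (by linarith) hx1,
    div_le_div_iff₀ two_pos (by linarith)]
  linarith [cos_le_one t]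

lemma two_mul_pi_le_sum_arcsin {l : ℕ} (hl : 3 ≤ l) {A B : ℕ → ℕ}
    (hA : ∑ i ∈ Icc 1 (l - 1), A i = l)
    (hdeg : ∑ i ∈ Icc 1 (l - 1), i * A i + ∑ j ∈ Icc 3 l, j * B j
      = 2 * (l + (∑ j ∈ Icc 3 l, B j) - 1)) {s : ℝ} (hs : 1 / 2 ≤ s) :
    2 * π ≤ (∑ i ∈ Icc 1 (l - 1), (i : ℝ) * A i * (2 * arcsin (2 * cos (π / (3 * i)) * s))) +
      ∑ j ∈ Icc 3 l, (j : ℝ) * B j * (2 * arcsin (2 * cos (π / j) * s)) := by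
  have hA_le : ∀ i ∈ Icc 1 (l - 1), (A i : ℝ) * (i * π - 2 * π / 3) ≤
      i * A i * (2 * arcsin (2 * cos (π / (3 * i)) * s)) := by
    intro i hi
    have hi1 : (1 : ℝ) ≤ i := by exact_mod_cast (mem_Icc.1 hi).1
    have hθ : π / (3 * i) ≤ π / 2 := div_le_div_of_nonneg_left pi_pos.le two_pos (by linarith)
    have harc := pi_div_two_sub_le_arcsin_two_mul_cos_mul (by positivity) hθ hs
    calc (A i : ℝ) * (i * π - 2 * π / 3) = i * A i * (2 * (π / 2 - π / (3 * i))) := by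
          field_simp
      _ ≤ _ := by gcongr
  have hB_le : ∀ j ∈ Icc 3 l, (B j : ℝ) * (j * π - 2 * π) ≤
      j * B j * (2 * arcsin (2 * cos (π / j) * s)) := by
    intro j hj
    have hj3 : (3 : ℝ) ≤ j := by exact_mod_cast (mem_Icc.1 hj).1
    have hθ : π / j ≤ π / 2 := div_le_div_of_nonneg_left pi_pos.le two_pos (by linarith)
    have harc := pi_div_two_sub_le_arcsin_two_mul_cos_mul (by positivity) hθ hs
    calc (B j : ℝ) * (j * π - 2 * π) = j * B j * (2 * (π / 2 - π / j)) := by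
          field_simp
      _ ≤ _ := by gcongr
  have hA_sum : ∑ i ∈ Icc 1 (l - 1), (A i : ℝ) * (i * π - 2 * π / 3) =
      π * ∑ i ∈ Icc 1 (l - 1), (i : ℝ) * A i - 2 * π / 3 * l := by
    have hAR : (l : ℝ) = ∑ i ∈ Icc 1 (l - 1), (A i : ℝ) := by exact_mod_cast hA.symm
    rw [hAR, mul_sum, mul_sum, ← sum_sub_distrib]
    exact sum_congr rfl fun _ _ => by ring
  have hB_sum : ∑ j ∈ Icc 3 l, (B j : ℝ) * (j * π - 2 * π) =
      π * ∑ j ∈ Icc 3 l, (j : ℝ) * B j - 2 * π * ∑ j ∈ Icc 3 l, (B j : ℝ) := by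
    rw [mul_sum, mul_sum, ← sum_sub_distrib]
    exact sum_congr rfl fun _ _ => by ring
  have hdegR : ∑ i ∈ Icc 1 (l - 1), (i : ℝ) * A i + ∑ j ∈ Icc 3 l, (j : ℝ) * B j =
      2 * (l + ∑ j ∈ Icc 3 l, (B j : ℝ) - 1) := by
    have h := congrArg (Nat.cast : ℕ → ℝ) hdeg
    push_cast [Nat.cast_sub (by omega : 1 ≤ l + ∑ j ∈ Icc 3 l, B j)] at h
    exact h
  have hl3 : (3 : ℝ) ≤ l := by exact_mod_cast hl
  have := add_le_add (sum_le_sum hA_le) (sum_le_sum hB_le)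
  rw [hA_sum, hB_sum] at this
  nlinarith [pi_pos]

theorem stmt_10 (l : ℕ) (hl : 4 ≤ l) (A B : ℕ → ℕ)
    (hA : ∑ i ∈ Finset.Icc 1 (l - 1), A i = l)
    (hdeg : ∑ i ∈ Finset.Icc 1 (l - 1), i * A i + ∑ j ∈ Finset.Icc 3 l, j * B j
      = 2 * (l + (∑ j ∈ Finset.Icc 3 l, B j) - 1)) :
    (fun β : ℝ =>
        (∑ i ∈ Finset.Icc 1 (l - 1),
            (i : ℝ) * (A i : ℝ) *
              (2 * Real.arcsin (2 * Real.cos (π / (3 * (i : ℝ))) * Real.sin (β / 2)))) +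
          (∑ j ∈ Finset.Icc 3 l,
            (j : ℝ) * (B j : ℝ) *
              (2 * Real.arcsin (2 * Real.cos (π / (j : ℝ)) * Real.sin (β / 2)))) -
          2 * π) 0 = -(2 * π) ∧
    (fun β : ℝ =>
        (∑ i ∈ Finset.Icc 1 (l - 1),
            (i : ℝ) * (A i : ℝ) *
              (2 * Real.arcsin (2 * Real.cos (π / (3 * (i : ℝ))) * Real.sin (β / 2)))) +
          (∑ j ∈ Finset.Icc 3 l,
            (j : ℝ) * (B j : ℝ) *
              (2 * Real.arcsin (2 * Real.cos (π / (j : ℝ)) * Real.sin (β / 2)))) -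
          2 * π) 0 < 0 ∧
    0 ≤ (fun β : ℝ =>
        (∑ i ∈ Finset.Icc 1 (l - 1),
            (i : ℝ) * (A i : ℝ) *
              (2 * Real.arcsin (2 * Real.cos (π / (3 * (i : ℝ))) * Real.sin (β / 2)))) +
          (∑ j ∈ Finset.Icc 3 l,
            (j : ℝ) * (B j : ℝ) *
              (2 * Real.arcsin (2 * Real.cos (π / (j : ℝ)) * Real.sin (β / 2)))) -
          2 * π) (2 * Real.arcsin (1 / (2 * Real.cos (π / (3 * ((l : ℝ) - 1)))))) := by
  have hl4 : (4 : ℝ) ≤ l := by exact_mod_cast hl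
  have ht : π / (3 * ((l : ℝ) - 1)) ≤ π / 3 :=
    div_le_div_of_nonneg_left pi_pos.le (by norm_num) (by linarith)
  have hs := one_half_le_sin_arcsin_inv_two_mul_cos (div_nonneg pi_pos.le (by linarith)) ht
  refine ⟨by simp, by simp [pi_pos], ?_⟩
  exact sub_nonneg.2 (two_mul_pi_le_sum_arcsin (by omega) hA hdeg hs)
end

section
/- Fix an integer l ≥ 4 and nonnegative integers A₁, …, A_{l−1}, B₃, …, B_l with w := ∑_{j=3}^{l} B_j satisfying ∑_{i=1}^{l−1} A_i = l and ∑_{i=1}^{l−1} i·A_i + ∑_{j=3}^{l} j·B_j = 2(l + w − 1). Define h(β) = ∑_{i=1}^{l−1} i·A_i·2·arcsin( 2·cos(π/(3i))·sin(β/2) ) + ∑_{j=3}^{l} j·B_j·2·arcsin( 2·cos(π/j)·sin(β/2) ) − 2π and K_l = 2·arcsin( 1 / (2·cos(π/(3(l−1)))) ). Then there exists a unique β ∈ [0, K_l] with h(β) = 0; moreover β > 0, and the corresponding inscribed circle radius is x determined by cosh x = 1 / (2·sin(β/2)). -/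
/-!
The angle sum `h` is a positively weighted sum of the maps `β ↦ 2 arcsin (2 c sin (β / 2))`,
which are strictly increasing as long as the argument of `arcsin` stays in `[0, 1]`; on
`[0, K_l]` this holds for every coefficient `c`, since all of them are at most
`cos (π / (3 (l - 1)))`. At `β = π / 3` the argument is `c = cos θ`, so each angle is `π - 2θ`, and
the two Diophantine relations turn `h (π / 3)` into `4π (l - 3) / 3 > 0`, while `h 0 = -2π`.
The intermediate value theorem gives the root, monotonicity its uniqueness, and `β < π / 3`
gives `1 / (2 sin (β / 2)) > 1`, which is `cosh x` for `x = arcosh (1 / (2 sin (β / 2))) > 0`.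
-/

open Real Set Finset

noncomputable section

def centralAngle (c β : ℝ) : ℝ := 2 * arcsin (2 * c * sin (β / 2))

/-- The function `h` of the statement. -/
def angleExcess (l : ℕ) (A B : ℕ → ℕ) (β : ℝ) : ℝ :=
  (∑ i ∈ Icc 1 (l - 1), (i : ℝ) * A i * centralAngle (cos (π / (3 * i))) β) +
    (∑ j ∈ Icc 3 l, (j : ℝ) * B j * centralAngle (cos (π / j)) β) - 2 * π

/-- The bound `K_l` of the statement. -/
def angleBound (l : ℕ) : ℝ := 2 * arcsin (1 / (2 * cos (π / (3 * ((l : ℝ) - 1)))))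

end

section WeightedSums

variable {ι α : Type*} [PartialOrder α] {s : Finset ι} {w : ι → ℝ} {g : ι → α → ℝ} {D : Set α}

lemma monotoneOn_sum_mul (hw : ∀ k ∈ s, 0 ≤ w k) (hg : ∀ k ∈ s, MonotoneOn (g k) D) :
    MonotoneOn (fun x ↦ ∑ k ∈ s, w k * g k x) D := fun _ hx _ hy hxy ↦
  sum_le_sum fun k hk ↦ mul_le_mul_of_nonneg_left (hg k hk hx hy hxy) (hw k hk)

lemma strictMonoOn_sum_mul (hw : ∀ k ∈ s, 0 ≤ w k) (hg : ∀ k ∈ s, StrictMonoOn (g k) D)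
    (hpos : ∃ k ∈ s, 0 < w k) : StrictMonoOn (fun x ↦ ∑ k ∈ s, w k * g k x) D :=
  fun _ hx _ hy hxy ↦ sum_lt_sum
    (fun k hk ↦ mul_le_mul_of_nonneg_left ((hg k hk).monotoneOn hx hy hxy.le) (hw k hk))
    (hpos.imp fun k ⟨hk, hwk⟩ ↦ ⟨hk, mul_lt_mul_of_pos_left (hg k hk hx hy hxy) hwk⟩)

end WeightedSums

lemma one_half_le_cos_pi_div {a : ℝ} (ha : 3 ≤ a) : 1 / 2 ≤ cos (π / a) := by
  rw [← cos_pi_div_three]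
  exact cos_le_cos_of_nonneg_of_le_pi (by positivity) (by linarith [pi_pos])
    (div_le_div_of_nonneg_left pi_pos.le (by norm_num) ha)

lemma cos_pi_div_le_cos_pi_div {a b : ℝ} (ha : 1 ≤ a) (hab : a ≤ b) :
    cos (π / a) ≤ cos (π / b) :=
  cos_le_cos_of_nonneg_of_le_pi (div_nonneg pi_pos.le (by linarith)) (div_le_self pi_pos.le ha)
    (div_le_div_of_nonneg_left pi_pos.le (by linarith) hab)

lemma pi_div_three_le_two_mul_arcsin {C : ℝ} (hC₀ : 0 < C) (hC₁ : C ≤ 1) :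
    π / 3 ≤ 2 * arcsin (1 / (2 * C)) := by
  have h : arcsin (1 / 2) ≤ arcsin (1 / (2 * C)) :=
    arcsin_le_arcsin (one_div_le_one_div_of_le (by positivity) (by linarith))
  rw [← sin_pi_div_six, arcsin_sin (by linarith [pi_pos]) (by linarith [pi_pos])] at h
  linarith

lemma continuous_centralAngle (c : ℝ) : Continuous (centralAngle c) := by
  unfold centralAngle
  fun_prop

lemma strictMonoOn_centralAngle {c C : ℝ} (hc : 0 < c) (hcC : c ≤ C) (hC : 1 / 2 ≤ C) :
    StrictMonoOn (centralAngle c) (Icc 0 (2 * arcsin (1 / (2 * C)))) := by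
  rintro β₁ ⟨hβ₁, -⟩ β₂ ⟨-, hβ₂⟩ hlt
  have hK : arcsin (1 / (2 * C)) ≤ π / 2 := arcsin_le_pi_div_two _
  have hsin : sin (β₁ / 2) < sin (β₂ / 2) :=
    sin_lt_sin_of_lt_of_le_pi_div_two (by linarith [pi_pos]) (by linarith) (by linarith)
  have hsin₁ : 0 ≤ sin (β₁ / 2) := sin_nonneg_of_nonneg_of_le_pi (by linarith) (by linarith)
  have hsin₂ : sin (β₂ / 2) ≤ 1 / (2 * C) := by
    rw [← le_arcsin_iff_sin_le ⟨by linarith, by linarith⟩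
      ⟨by rw [le_div_iff₀ (by linarith)]; linarith, by rw [div_le_one (by linarith)]; linarith⟩]
    linarith
  have harg : 2 * c * sin (β₂ / 2) ≤ 1 :=
    calc 2 * c * sin (β₂ / 2) ≤ 2 * C * sin (β₂ / 2) := by gcongr; linarith
      _ ≤ 2 * C * (1 / (2 * C)) := mul_le_mul_of_nonneg_left hsin₂ (by linarith)
      _ = 1 := by field_simp
  have harg₁ : 0 ≤ 2 * c * sin (β₁ / 2) := mul_nonneg (by positivity) hsin₁
  exact mul_lt_mul_of_pos_left
    (arcsin_lt_arcsin (by linarith) (mul_lt_mul_of_pos_left hsin (by positivity)) harg) two_pos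

lemma centralAngle_cos_pi_div_three {θ : ℝ} (h₀ : 0 ≤ θ) (hπ : θ ≤ π) :
    centralAngle (cos θ) (π / 3) = π - 2 * θ := by
  have hsin : sin (π / 3 / 2) = 1 / 2 := by rw [div_div, ← sin_pi_div_six]; ring_nf
  have harc := arccos_eq_pi_div_two_sub_arcsin (cos θ)
  rw [arccos_cos h₀ hπ] at harc
  rw [centralAngle, hsin, show 2 * cos θ * (1 / 2) = cos θ by ring]
  linarith

section AngleExcess

variable {l : ℕ} {A B : ℕ → ℕ}

lemma angleExcess_zero (l : ℕ) (A B : ℕ → ℕ) : angleExcess l A B 0 = -(2 * π) := by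
  simp [angleExcess, centralAngle]

lemma continuous_angleExcess (l : ℕ) (A B : ℕ → ℕ) : Continuous (angleExcess l A B) := by
  have := continuous_centralAngle
  unfold angleExcess
  fun_prop

lemma strictMonoOn_centralAngle_cos_pi_div {a : ℝ} (ha : 3 ≤ a) (hal : a ≤ 3 * ((l : ℝ) - 1)) :
    StrictMonoOn (centralAngle (cos (π / a))) (Icc 0 (angleBound l)) :=
  strictMonoOn_centralAngle (by linarith [one_half_le_cos_pi_div ha])
    (cos_pi_div_le_cos_pi_div (by linarith) hal) (one_half_le_cos_pi_div (by linarith))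

lemma strictMonoOn_angleExcess (hl : 2 ≤ l) (hA : ∑ i ∈ Icc 1 (l - 1), A i ≠ 0) :
    StrictMonoOn (angleExcess l A B) (Icc 0 (angleBound l)) := by
  have hl' : (2 : ℝ) ≤ l := by exact_mod_cast hl
  have hmonoA : StrictMonoOn
      (fun β ↦ ∑ i ∈ Icc 1 (l - 1), (i : ℝ) * A i * centralAngle (cos (π / (3 * i))) β)
      (Icc 0 (angleBound l)) := by
    obtain ⟨i₀, hi₀, hAi₀⟩ := exists_ne_zero_of_sum_ne_zero hA
    refine strictMonoOn_sum_mul (fun _ _ ↦ by positivity) (fun i hi ↦ ?_)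
      ⟨i₀, hi₀, mul_pos (Nat.cast_pos.mpr (Finset.mem_Icc.mp hi₀).1)
        (Nat.cast_pos.mpr (Nat.pos_of_ne_zero hAi₀))⟩
    obtain ⟨hi₁, hil⟩ := Finset.mem_Icc.mp hi
    have hi₁' : (1 : ℝ) ≤ i := by exact_mod_cast hi₁
    have hil' : (i : ℝ) + 1 ≤ l := by exact_mod_cast (by omega : i + 1 ≤ l)
    exact strictMonoOn_centralAngle_cos_pi_div (by linarith) (by linarith)
  have hmonoB : MonotoneOn
      (fun β ↦ ∑ j ∈ Icc 3 l, (j : ℝ) * B j * centralAngle (cos (π / j)) β)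
      (Icc 0 (angleBound l)) := by
    refine monotoneOn_sum_mul (fun _ _ ↦ by positivity) (fun j hj ↦ ?_)
    obtain ⟨hj₃, hjl⟩ := Finset.mem_Icc.mp hj
    have hj₃' : (3 : ℝ) ≤ j := by exact_mod_cast hj₃
    have hjl' : (j : ℝ) ≤ l := by exact_mod_cast hjl
    exact (strictMonoOn_centralAngle_cos_pi_div hj₃' (by linarith)).monotoneOn
  exact fun _ h₁ _ h₂ hlt ↦ sub_lt_sub_right (hmonoA.add_monotone hmonoB h₁ h₂ hlt) _

lemma angleExcess_pi_div_three (hl : 1 ≤ l) (hA : ∑ i ∈ Icc 1 (l - 1), A i = l)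
    (hdeg : ∑ i ∈ Icc 1 (l - 1), i * A i + ∑ j ∈ Icc 3 l, j * B j
      = 2 * (l + (∑ j ∈ Icc 3 l, B j) - 1)) :
    angleExcess l A B (π / 3) = 4 * π * ((l : ℝ) - 3) / 3 := by
  have htermA : ∀ i ∈ Finset.Icc 1 (l - 1),
      (i : ℝ) * A i * centralAngle (cos (π / (3 * i))) (π / 3)
        = π * (i * A i) - 2 * π / 3 * A i := by
    intro i hi
    have hi₁ : (1 : ℝ) ≤ i := by exact_mod_cast (Finset.mem_Icc.mp hi).1
    rw [centralAngle_cos_pi_div_three (by positivity) (div_le_self pi_pos.le (by linarith))]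
    field_simp
  have htermB : ∀ j ∈ Finset.Icc 3 l,
      (j : ℝ) * B j * centralAngle (cos (π / j)) (π / 3)
        = π * (j * B j) - 2 * π * B j := by
    intro j hj
    have hj₃ : (3 : ℝ) ≤ j := by exact_mod_cast (Finset.mem_Icc.mp hj).1
    rw [centralAngle_cos_pi_div_three (by positivity) (div_le_self pi_pos.le (by linarith))]
    field_simp
  have hA' : ∑ i ∈ Icc 1 (l - 1), (A i : ℝ) = l := by exact_mod_cast hA
  have hdeg' : ∑ i ∈ Icc 1 (l - 1), (i : ℝ) * A i + ∑ j ∈ Icc 3 l, (j : ℝ) * B j + 2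
      = 2 * l + 2 * ∑ j ∈ Icc 3 l, (B j : ℝ) := by exact_mod_cast (by omega)
  rw [angleExcess, sum_congr rfl htermA, sum_congr rfl htermB, sum_sub_distrib, sum_sub_distrib,
    ← mul_sum, ← mul_sum, ← mul_sum, ← mul_sum]
  linear_combination π * hdeg' - 2 * π / 3 * hA'

end AngleExcess

lemma exists_pos_cosh_eq_one_div_two_mul_sin {β : ℝ} (h₀ : 0 < β) (hβ : β < π / 3) :
    ∃ x, 0 < x ∧ cosh x = 1 / (2 * sin (β / 2)) := by
  have hsin₀ : 0 < sin (β / 2) := sin_pos_of_pos_of_lt_pi (by positivity) (by linarith [pi_pos])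
  have hsin : sin (β / 2) < 1 / 2 := by
    rw [← sin_pi_div_six]
    exact sin_lt_sin_of_lt_of_le_pi_div_two (by linarith [pi_pos]) (by linarith [pi_pos])
      (by linarith)
  have hy : 1 < 1 / (2 * sin (β / 2)) := by rw [lt_div_iff₀ (by positivity)]; linarith
  exact ⟨arcosh _, arcosh_pos hy, cosh_arcosh hy.le⟩

theorem stmt_11 (l : ℕ) (hl : 4 ≤ l) (A B : ℕ → ℕ)
    (hA : ∑ i ∈ Finset.Icc 1 (l - 1), A i = l)
    (hdeg : ∑ i ∈ Finset.Icc 1 (l - 1), i * A i + ∑ j ∈ Finset.Icc 3 l, j * B j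
      = 2 * (l + (∑ j ∈ Finset.Icc 3 l, B j) - 1)) :
    (∃! β : ℝ,
      β ∈ Set.Icc 0 (2 * Real.arcsin (1 / (2 * Real.cos (π / (3 * ((l : ℝ) - 1)))))) ∧
      (∑ i ∈ Finset.Icc 1 (l - 1),
          (i : ℝ) * (A i : ℝ) *
            (2 * Real.arcsin (2 * Real.cos (π / (3 * (i : ℝ))) * Real.sin (β / 2)))) +
        (∑ j ∈ Finset.Icc 3 l,
          (j : ℝ) * (B j : ℝ) *
            (2 * Real.arcsin (2 * Real.cos (π / (j : ℝ)) * Real.sin (β / 2)))) -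
        2 * π = 0) ∧
    (∀ β : ℝ,
      β ∈ Set.Icc 0 (2 * Real.arcsin (1 / (2 * Real.cos (π / (3 * ((l : ℝ) - 1)))))) →
      (∑ i ∈ Finset.Icc 1 (l - 1),
          (i : ℝ) * (A i : ℝ) *
            (2 * Real.arcsin (2 * Real.cos (π / (3 * (i : ℝ))) * Real.sin (β / 2)))) +
        (∑ j ∈ Finset.Icc 3 l,
          (j : ℝ) * (B j : ℝ) *
            (2 * Real.arcsin (2 * Real.cos (π / (j : ℝ)) * Real.sin (β / 2)))) -
        2 * π = 0 →
      0 < β ∧ ∃ x : ℝ, 0 < x ∧ Real.cosh x = 1 / (2 * Real.sin (β / 2))) := by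
  have hl' : (4 : ℝ) ≤ l := by exact_mod_cast hl
  have hmono : StrictMonoOn (angleExcess l A B) (Icc 0 (angleBound l)) :=
    strictMonoOn_angleExcess (by omega) (by omega)
  have hC : 1 / 2 ≤ cos (π / (3 * ((l : ℝ) - 1))) := one_half_le_cos_pi_div (by linarith)
  have hbound : π / 3 ≤ angleBound l :=
    pi_div_three_le_two_mul_arcsin (by linarith) (cos_le_one _)
  have hneg : angleExcess l A B 0 < 0 := by rw [angleExcess_zero]; linarith [pi_pos]
  have hpos : 0 < angleExcess l A B (π / 3) := by
    rw [angleExcess_pi_div_three (by omega) hA hdeg]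
    exact div_pos (mul_pos (by positivity) (by linarith)) three_pos
  obtain ⟨β₀, ⟨hβ₀, hβ₀π⟩, hroot⟩ : ∃ β₀ ∈ Ioo 0 (π / 3), angleExcess l A B β₀ = 0 :=
    intermediate_value_Ioo (by positivity) (continuous_angleExcess l A B).continuousOn ⟨hneg, hpos⟩
  have hmem : β₀ ∈ Icc 0 (angleBound l) := ⟨hβ₀.le, hβ₀π.le.trans hbound⟩
  have huniq : ∀ β ∈ Icc 0 (angleBound l), angleExcess l A B β = 0 → β = β₀ :=
    fun β hβ h ↦ hmono.injOn hβ hmem (h.trans hroot.symm)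
  refine ⟨⟨β₀, ⟨hmem, hroot⟩, fun β hβ ↦ huniq β hβ.1 hβ.2⟩, fun β hβ h ↦ ?_⟩
  obtain rfl := huniq β hβ h
  exact ⟨hβ₀, exists_pos_cosh_eq_one_div_two_mul_sin hβ₀ hβ₀π⟩
end

section
/- Fix an integer l ≥ 4 and consider the maximal Diophantine solution A₁ = l, A_i = 0 for 2 ≤ i ≤ l−1, B₃ = l − 2, B_j = 0 for 4 ≤ j ≤ l. Then the function h(β) = ∑_{i=1}^{l−1} i·A_i·2·arcsin( 2·cos(π/(3i))·sin(β/2) ) + ∑_{j=3}^{l} j·B_j·2·arcsin( 2·cos(π/j)·sin(β/2) ) − 2π equals (4l − 6)·β − 2π for all β ∈ [0, π]; in particular its unique root in [0, π] is β = 2π/(4l − 6), and the corresponding radius x satisfies cosh x = 1 / (2·sin(π/(4l − 6))). -/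
/-!
For the maximal solution only the terms `i = 1` and `j = 3` survive, and both carry the factor
`2 cos (π / 3) = 1`, so every `arcsin` collapses to `arcsin (sin (β / 2)) = β / 2` and `h` is
affine in `β` with slope `l + 3 (l - 2) = 4 l - 6`. The radius exists because
`sin (π / (4 l - 6)) < π / (4 l - 6) < 1 / 2`, so the prescribed value of `cosh x` exceeds `1`.
-/

open Real

/-- The function `h` of the statement. -/
noncomputable def angleDefect (l : ℕ) (A B : ℕ → ℕ) (β : ℝ) : ℝ :=
  (∑ i ∈ Finset.Icc 1 (l - 1),
      (i : ℝ) * (A i : ℝ) *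
        (2 * Real.arcsin (2 * Real.cos (π / (3 * (i : ℝ))) * Real.sin (β / 2)))) +
    (∑ j ∈ Finset.Icc 3 l,
      (j : ℝ) * (B j : ℝ) *
        (2 * Real.arcsin (2 * Real.cos (π / (j : ℝ)) * Real.sin (β / 2)))) -
    2 * π

theorem Finset.sum_Icc_eq_left {M : Type*} [AddCommMonoid M] {a b : ℕ} (hab : a ≤ b)
    (f : ℕ → M) (hf : ∀ i, a < i → i ≤ b → f i = 0) :
    ∑ i ∈ Finset.Icc a b, f i = f a :=
  Finset.sum_eq_single_of_mem a (Finset.mem_Icc.mpr ⟨le_rfl, hab⟩) fun i hi hia =>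
    hf i (lt_of_le_of_ne (Finset.mem_Icc.mp hi).1 (Ne.symm hia)) (Finset.mem_Icc.mp hi).2

theorem arcsin_two_mul_cos_pi_div_three_mul_sin_half {β : ℝ} (h0 : 0 ≤ β) (hπ : β ≤ π) :
    arcsin (2 * cos (π / 3) * sin (β / 2)) = β / 2 := by
  rw [cos_pi_div_three, show (2 : ℝ) * (1 / 2) = 1 by norm_num, one_mul]
  exact arcsin_sin (by linarith [pi_pos]) (by linarith)

theorem angleDefect_eq_of_maximal {l : ℕ} (hl : 3 ≤ l) {A B : ℕ → ℕ}
    (hA1 : A 1 = l) (hA : ∀ i, 2 ≤ i → i ≤ l - 1 → A i = 0)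
    (hB3 : B 3 = l - 2) (hB : ∀ j, 4 ≤ j → j ≤ l → B j = 0)
    {β : ℝ} (h0 : 0 ≤ β) (hπ : β ≤ π) :
    angleDefect l A B β = (4 * (l : ℝ) - 6) * β - 2 * π := by
  unfold angleDefect
  rw [Finset.sum_Icc_eq_left (by omega) _ fun i hi hil => by simp [hA i hi hil],
    Finset.sum_Icc_eq_left hl _ fun j hj hjl => by simp [hB j hj hjl]]
  simp only [hA1, hB3, Nat.cast_sub (by omega : 2 ≤ l), Nat.cast_one, Nat.cast_ofNat, mul_one,
    arcsin_two_mul_cos_pi_div_three_mul_sin_half h0 hπ]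
  ring

theorem one_lt_one_div_two_mul_sin {θ : ℝ} (h0 : 0 < θ) (h : θ ≤ 1 / 2) :
    1 < 1 / (2 * sin θ) := by
  have hsin : 0 < sin θ := sin_pos_of_pos_of_lt_pi h0 (by linarith [pi_gt_three])
  rw [one_lt_div (by positivity)]
  linarith [sin_lt h0]

theorem exists_pos_cosh_eq {y : ℝ} (hy : 1 < y) : ∃ x, 0 < x ∧ cosh x = y := by
  have hy2 : 0 < y ^ 2 - 1 := by nlinarith
  refine ⟨arsinh √(y ^ 2 - 1), arsinh_pos_iff.mpr (sqrt_pos.mpr hy2), ?_⟩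
  rw [cosh_arsinh, sq_sqrt hy2.le, add_sub_cancel, sqrt_sq (by linarith)]

theorem stmt_12 (l : ℕ) (hl : 4 ≤ l) (A B : ℕ → ℕ)
    (hA1 : A 1 = l) (hA : ∀ i, 2 ≤ i → i ≤ l - 1 → A i = 0)
    (hB3 : B 3 = l - 2) (hB : ∀ j, 4 ≤ j → j ≤ l → B j = 0) :
    (∀ β ∈ Set.Icc (0 : ℝ) π,
      (∑ i ∈ Finset.Icc 1 (l - 1),
          (i : ℝ) * (A i : ℝ) *
            (2 * Real.arcsin (2 * Real.cos (π / (3 * (i : ℝ))) * Real.sin (β / 2)))) +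
        (∑ j ∈ Finset.Icc 3 l,
          (j : ℝ) * (B j : ℝ) *
            (2 * Real.arcsin (2 * Real.cos (π / (j : ℝ)) * Real.sin (β / 2)))) -
        2 * π = (4 * (l : ℝ) - 6) * β - 2 * π) ∧
    (∀ β ∈ Set.Icc (0 : ℝ) π,
      ((∑ i ∈ Finset.Icc 1 (l - 1),
          (i : ℝ) * (A i : ℝ) *
            (2 * Real.arcsin (2 * Real.cos (π / (3 * (i : ℝ))) * Real.sin (β / 2)))) +
        (∑ j ∈ Finset.Icc 3 l,
          (j : ℝ) * (B j : ℝ) *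
            (2 * Real.arcsin (2 * Real.cos (π / (j : ℝ)) * Real.sin (β / 2)))) -
        2 * π = 0 ↔ β = 2 * π / (4 * (l : ℝ) - 6))) ∧
    (∃ x : ℝ, 0 < x ∧
      Real.cosh x = 1 / (2 * Real.sin (π / (4 * (l : ℝ) - 6)))) := by
  have hl' : (4 : ℝ) ≤ l := by exact_mod_cast hl
  have hslope : 0 < 4 * (l : ℝ) - 6 := by linarith
  have key : ∀ β ∈ Set.Icc (0 : ℝ) π, angleDefect l A B β = (4 * (l : ℝ) - 6) * β - 2 * π :=
    fun β hβ => angleDefect_eq_of_maximal (by omega) hA1 hA hB3 hB hβ.1 hβ.2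
  refine ⟨key, fun β hβ => ?_, exists_pos_cosh_eq (one_lt_one_div_two_mul_sin ?_ ?_)⟩
  · change angleDefect l A B β = 0 ↔ _
    rw [key β hβ, sub_eq_zero, eq_div_iff hslope.ne', mul_comm]
  · positivity
  · rw [div_le_iff₀ hslope]
    linarith [pi_le_four]
end

section
/- Let l ≥ 5 be an integer and let i be an integer with 1 ≤ i ≤ l − 1. Then arcsin( 2·sin(π/(4l−6))·cos(π/(3i)) ) < (3/π)·arcsin( 2·sin(π/(4l−6)) )·( π/2 − π/(3i) ). -/
/-! Put `s = 2 sin (π / (4l - 6))`, so that `0 < s < 1`, and `a = arcsin s`. For `i ≥ 2` the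
angle `π / (3i)` is at most `π / 6`, so the right-hand side is at least `a`, while the left-hand
side is `arcsin (s cos (π / (3i))) < a`. For `i = 1` the inequality reads
`arcsin (s / 2) < a / 2`, which holds because `s / 2 = sin (a / 2) cos (a / 2) < sin (a / 2)`. -/

open Real

theorem two_mul_sin_lt_one {x : ℝ} (hx0 : 0 ≤ x) (hx : x < 1 / 2) : 2 * sin x < 1 := by
  linarith [sin_le hx0]

theorem cos_lt_one_of_pos_of_le_pi_div_two {x : ℝ} (hx0 : 0 < x) (hx : x ≤ π / 2) : cos x < 1 :=
  cos_zero ▸ cos_lt_cos_of_nonneg_of_le_pi_div_two le_rfl hx hx0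

theorem arcsin_mul_lt_arcsin {s c : ℝ} (hs0 : 0 < s) (hs1 : s ≤ 1) (hc0 : 0 ≤ c) (hc1 : c < 1) :
    arcsin (s * c) < arcsin s :=
  arcsin_lt_arcsin (by nlinarith) (mul_lt_of_lt_one_right hs0 hc1) hs1

theorem arcsin_div_two_lt_arcsin_div_two {s : ℝ} (hs0 : 0 < s) (hs1 : s ≤ 1) :
    arcsin (s / 2) < arcsin s / 2 := by
  set a := arcsin s
  have ha0 : 0 < a := arcsin_pos.2 hs0
  have ha : a ≤ π / 2 := arcsin_le_pi_div_two s
  have hs : s / 2 = sin (a / 2) * cos (a / 2) := by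
    have h := sin_two_mul (a / 2)
    rw [mul_div_cancel₀ a two_ne_zero, sin_arcsin (by linarith) hs1] at h
    linarith
  have hsin : 0 < sin (a / 2) := sin_pos_of_pos_of_lt_pi (by linarith) (by linarith)
  have hcos : cos (a / 2) < 1 := cos_lt_one_of_pos_of_le_pi_div_two (by linarith) (by linarith)
  rw [arcsin_lt_iff_lt_sin ⟨by linarith, by linarith⟩ ⟨by linarith, by linarith⟩, hs]
  exact mul_lt_of_lt_one_right hsin hcos

theorem arcsin_mul_cos_pi_div_lt {s : ℝ} (hs0 : 0 < s) (hs1 : s ≤ 1) {i : ℕ} (hi : 1 ≤ i) :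
    arcsin (s * cos (π / (3 * i))) < 3 / π * arcsin s * (π / 2 - π / (3 * i)) := by
  obtain rfl | hi_gt := hi.eq_or_lt
  · have hrhs : 3 / π * arcsin s * (π / 2 - π / (3 * 1)) = arcsin s / 2 := by
      field_simp
      ring
    rw [Nat.cast_one, hrhs, mul_one, cos_pi_div_three, ← div_eq_mul_one_div]
    exact arcsin_div_two_lt_arcsin_div_two hs0 hs1
  · have hi2 : (2 : ℝ) ≤ i := by exact_mod_cast hi_gt
    set θ := π / (3 * i)
    have hθ0 : 0 < θ := by positivity
    have hθ : θ ≤ π / 6 := div_le_div_of_nonneg_left pi_pos.le (by norm_num) (by linarith)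
    have hcos0 : 0 ≤ cos θ := cos_nonneg_of_neg_pi_div_two_le_of_le (by linarith) (by linarith)
    have hcos1 : cos θ < 1 := cos_lt_one_of_pos_of_le_pi_div_two hθ0 (by linarith)
    have ha0 : 0 ≤ arcsin s := arcsin_nonneg.2 hs0.le
    calc arcsin (s * cos θ) < arcsin s := arcsin_mul_lt_arcsin hs0 hs1 hcos0 hcos1
      _ = 3 / π * arcsin s * (π / 3) := by field_simp
      _ ≤ 3 / π * arcsin s * (π / 2 - θ) := by gcongr; linarith

theorem stmt_14_general (l : ℕ) (hl : 5 ≤ l) (i : ℕ) (hi1 : 1 ≤ i) :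
    Real.arcsin (2 * Real.sin (π / (4 * (l : ℝ) - 6)) * Real.cos (π / (3 * (i : ℝ)))) <
      3 / π * Real.arcsin (2 * Real.sin (π / (4 * (l : ℝ) - 6))) *
        (π / 2 - π / (3 * (i : ℝ))) := by
  have hd : (14 : ℝ) ≤ 4 * l - 6 := by
    have : (5 : ℝ) ≤ l := by exact_mod_cast hl
    linarith
  have hx0 : 0 < π / (4 * l - 6) := div_pos pi_pos (by linarith)
  have hx : π / (4 * l - 6) < 1 / 2 :=
    (div_le_div_of_nonneg_left pi_pos.le (by norm_num) hd).trans_lt (by linarith [pi_lt_d2])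
  have hs0 : 0 < 2 * sin (π / (4 * l - 6)) :=
    mul_pos two_pos (sin_pos_of_pos_of_lt_pi hx0 (by linarith [pi_gt_three]))
  exact arcsin_mul_cos_pi_div_lt hs0 (two_mul_sin_lt_one hx0.le hx).le hi1

theorem stmt_14 (l : ℕ) (hl : 5 ≤ l) (i : ℕ) (hi1 : 1 ≤ i) (hi2 : i ≤ l - 1) :
    Real.arcsin (2 * Real.sin (π / (4 * (l : ℝ) - 6)) * Real.cos (π / (3 * (i : ℝ)))) <
      3 / π * Real.arcsin (2 * Real.sin (π / (4 * (l : ℝ) - 6))) *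
        (π / 2 - π / (3 * (i : ℝ))) :=
  stmt_14_general l hl i hi1
end

section
/- Let l ≥ 5 be an integer and let j be an integer with 3 ≤ j ≤ l. Then arcsin( 2·sin(π/(4l−6))·cos(π/j) ) < (3/π)·arcsin( 2·sin(π/(4l−6)) )·( π/2 − π/j ). -/
/-!
Put `x = 2 sin (π / (4l - 6)) ∈ (0, 1]` and `c = cos (π / j) ∈ (0, 1)`. Strict concavity of `sin`
on `[0, π]` gives `c sin y < sin (c y)`, hence `arcsin (c x) < c arcsin x`. It remains to bound
`cos t ≤ (3 / π) (π / 2 - t)` for `t = π / j ≤ π / 3`: the right side is the line through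
`(π / 3, 1 / 2)` of slope `-3 / π`, which is steeper than the slope `-sin (π / 3)` that `cos` has
there.
-/

open Real

theorem Real.arcsin_mul_lt_mul_arcsin {c x : ℝ} (hc₀ : 0 < c) (hc₁ : c < 1) (hx₀ : 0 < x)
    (hx₁ : x ≤ 1) : arcsin (c * x) < c * arcsin x := by
  set y := arcsin x
  have hy₀ : 0 < y := arcsin_pos.mpr hx₀
  have hy₁ : y ≤ π / 2 := arcsin_le_pi_div_two x
  have hcy : c * y ∈ Set.Ioc (-(π / 2)) (π / 2) :=
    ⟨by nlinarith [pi_pos], by nlinarith⟩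
  rw [arcsin_lt_iff_lt_sin' hcy]
  have hconcave := strictConcaveOn_sin_Icc.2 (Set.left_mem_Icc.2 pi_pos.le)
    (show y ∈ Set.Icc 0 π from ⟨hy₀.le, by linarith [pi_pos]⟩) hy₀.ne (sub_pos.2 hc₁) hc₀
    (by ring)
  simp only [smul_eq_mul, sin_zero, mul_zero, zero_add] at hconcave
  rwa [sin_arcsin (by linarith) hx₁] at hconcave

theorem Real.cos_le_three_div_pi_mul_pi_div_two_sub {t : ℝ} (ht : t ≤ π / 3) :
    cos t ≤ 3 / π * (π / 2 - t) := by
  rcases le_or_gt t 0 with ht₀ | ht₀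
  · calc cos t ≤ 1 := cos_le_one t
      _ ≤ 3 / π * (π / 2) := by field_simp; norm_num
      _ ≤ 3 / π * (π / 2 - t) := by gcongr; linarith
  have hdiff : cos t - 1 / 2 = 2 * sin ((t + π / 3) / 2) * sin ((π / 3 - t) / 2) := by
    rw [← cos_pi_div_three, cos_sub_cos, ← neg_sub, neg_div, sin_neg]
    ring
  have hsin₁ : sin ((t + π / 3) / 2) ≤ √3 / 2 := by
    rw [← sin_pi_div_three]
    exact sin_le_sin_of_le_of_le_pi_div_two (by linarith [pi_pos]) (by linarith [pi_pos])
      (by linarith)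
  have hsin₂ : 0 ≤ sin ((π / 3 - t) / 2) :=
    sin_nonneg_of_nonneg_of_le_pi (by linarith) (by linarith)
  have hsin₃ : sin ((π / 3 - t) / 2) ≤ (π / 3 - t) / 2 := sin_le (by linarith)
  have hslope : √3 * π ≤ 6 := by
    nlinarith [sq_sqrt (show (0 : ℝ) ≤ 3 by norm_num), sqrt_nonneg 3, pi_pos, pi_lt_d2]
  have hline : 3 / π * (π / 2 - t) = 1 / 2 + 3 / π * (π / 3 - t) := by
    field_simp
    ring
  rw [hline, ← sub_le_iff_le_add', hdiff]
  calc 2 * sin ((t + π / 3) / 2) * sin ((π / 3 - t) / 2)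
      ≤ 2 * (√3 / 2) * ((π / 3 - t) / 2) := by gcongr
    _ = √3 * π / 6 * (3 / π * (π / 3 - t)) := by field_simp; ring
    _ ≤ 3 / π * (π / 3 - t) := by
      refine mul_le_of_le_one_left (by positivity) ?_
      rw [div_le_one (by norm_num)]
      exact hslope

theorem stmt_15_general (l : ℕ) (hl : 5 ≤ l) (j : ℕ) (hj1 : 3 ≤ j) :
    Real.arcsin (2 * Real.sin (π / (4 * (l : ℝ) - 6)) * Real.cos (π / (j : ℝ))) <
      3 / π * Real.arcsin (2 * Real.sin (π / (4 * (l : ℝ) - 6))) *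
        (π / 2 - π / (j : ℝ)) := by
  have hl' : (5 : ℝ) ≤ l := by exact_mod_cast hl
  have hj' : (3 : ℝ) ≤ j := by exact_mod_cast hj1
  set θ := π / (4 * (l : ℝ) - 6)
  have hθ₀ : 0 < θ := div_pos pi_pos (by linarith)
  have hθ₁ : θ ≤ π / 6 := div_le_div_of_nonneg_left pi_pos.le (by norm_num) (by linarith)
  have hx₀ : 0 < 2 * sin θ := by
    have := sin_pos_of_pos_of_lt_pi hθ₀ (by linarith [pi_pos]); positivity
  have hx₁ : 2 * sin θ ≤ 1 := by
    have := sin_le_sin_of_le_of_le_pi_div_two (by linarith [pi_pos]) (by linarith [pi_pos]) hθ₁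
    rw [sin_pi_div_six] at this
    linarith
  have hπj₀ : 0 < π / j := div_pos pi_pos (by linarith)
  have hπj₁ : π / j ≤ π / 3 := div_le_div_of_nonneg_left pi_pos.le (by norm_num) hj'
  have hc₀ : 0 < cos (π / j) := cos_pos_of_mem_Ioo ⟨by linarith [pi_pos], by linarith [pi_pos]⟩
  have hc₁ : cos (π / j) < 1 := by
    simpa using cos_lt_cos_of_nonneg_of_le_pi le_rfl (by linarith [pi_pos]) hπj₀
  calc arcsin (2 * sin θ * cos (π / j))
      = arcsin (cos (π / j) * (2 * sin θ)) := by rw [mul_comm]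
    _ < cos (π / j) * arcsin (2 * sin θ) := arcsin_mul_lt_mul_arcsin hc₀ hc₁ hx₀ hx₁
    _ ≤ 3 / π * (π / 2 - π / j) * arcsin (2 * sin θ) := by
      gcongr
      · exact (arcsin_pos.2 hx₀).le
      · exact cos_le_three_div_pi_mul_pi_div_two_sub hπj₁
    _ = 3 / π * arcsin (2 * sin θ) * (π / 2 - π / j) := by ring

theorem stmt_15 (l : ℕ) (hl : 5 ≤ l) (j : ℕ) (hj1 : 3 ≤ j) (hj2 : j ≤ l) :
    Real.arcsin (2 * Real.sin (π / (4 * (l : ℝ) - 6)) * Real.cos (π / (j : ℝ))) <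
      3 / π * Real.arcsin (2 * Real.sin (π / (4 * (l : ℝ) - 6))) *
        (π / 2 - π / (j : ℝ)) :=
  stmt_15_general l hl j hj1
end
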